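/- Let $\psi_1,\dots,\psi_{N_p}:\mathbb{R}\to\mathbb{C}$ be differentiable functions satisfying, for each $j$, the evolution equation $\frac{d\psi_j}{dt} = \mathrm{i}\frac{\lambda^2}{4\pi}\Big[\sum_{k\neq j} 2\Gamma_k \frac{\psi_j-\psi_k}{|\psi_j-\psi_k|^2} - \sum_{m\neq n} \Gamma_n \frac{\psi_m\overline{\psi}_n - \psi_n\overline{\psi}_m}{|\psi_m-\psi_n|^2\left(\sum_{i=1}^{N_p}\overline{\psi}_i\right)}\Big]$, where $\lambda\in\mathbb{R}$, $\Gamma_k\in\mathbb{R}$, and assume $\psi_j(t)\neq\psi_k(t)$ for all $j\neq k$ and $\sum_i \overline{\psi}_i(t)\neq 0$ for all $t$. Then $\frac{d}{dt}\sum_{j=1}^{N_p}|\psi_j(t)|^2 = 0$, i.e. the total norm $\sum_j |\psi_j|^2$ is conserved. -/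

import Mathlib

open Finset Complex

/-- velocity prefactor -/
noncomputable def qvmC (lam : ℝ) : ℂ := Complex.I * ((lam : ℂ)^2 / (4 * Real.pi))

/-- mutual-interaction term -/
noncomputable def qvmA (Np : ℕ) (φ : Fin Np → ℂ) (Γ : Fin Np → ℝ) : Fin Np → ℂ := fun j =>
  ∑ k ∈ univ \ {j}, 2 * (Γ k : ℂ) * (φ j - φ k) / ((‖φ j - φ k‖ : ℂ)^2)

/-- correction term -/
noncomputable def qvmT (Np : ℕ) (φ : Fin Np → ℂ) (Γ : Fin Np → ℝ) : ℂ :=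
  ∑ m, ∑ n ∈ univ \ {m}, (Γ n : ℂ) *
    (φ m * (starRingEnd ℂ) (φ n) - φ n * (starRingEnd ℂ) (φ m)) /
    ((‖φ m - φ n‖ : ℂ)^2 * (∑ i, (starRingEnd ℂ) (φ i)))

/-- correction term with the sum factor cleared -/
noncomputable def qvmU (Np : ℕ) (φ : Fin Np → ℂ) (Γ : Fin Np → ℝ) : ℂ :=
  ∑ m, ∑ n ∈ univ \ {m}, (Γ n : ℂ) *
    (φ m * (starRingEnd ℂ) (φ n) - φ n * (starRingEnd ℂ) (φ m)) /
    ((‖φ m - φ n‖ : ℂ)^2)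

lemma qvmC_conj (lam : ℝ) : (starRingEnd ℂ) (qvmC lam) = -(qvmC lam) := by
  simp [qvmC, map_mul, map_div₀, map_pow, Complex.conj_ofReal, Complex.conj_I, map_ofNat]

lemma qvmU_conj (Np : ℕ) (φ : Fin Np → ℂ) (Γ : Fin Np → ℝ) :
    (starRingEnd ℂ) (qvmU Np φ Γ) = -(qvmU Np φ Γ) := by
  unfold qvmU
  rw [← Finset.sum_neg_distrib, map_sum]
  refine sum_congr rfl fun m _ => ?_
  rw [← Finset.sum_neg_distrib, map_sum]
  refine sum_congr rfl fun n _ => ?_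
  simp only [map_div₀, map_mul, map_sub, map_pow, Complex.conj_ofReal, Complex.conj_conj]
  ring

lemma qvmST (Np : ℕ) (φ : Fin Np → ℂ) (Γ : Fin Np → ℝ)
    (hS : (∑ i, (starRingEnd ℂ) (φ i)) ≠ 0) :
    (∑ i, (starRingEnd ℂ) (φ i)) * qvmT Np φ Γ = qvmU Np φ Γ := by
  unfold qvmT qvmU
  rw [Finset.mul_sum]
  refine sum_congr rfl fun m _ => ?_
  rw [Finset.mul_sum]
  refine sum_congr rfl fun n _ => ?_
  by_cases hr : ((‖φ m - φ n‖ : ℂ)^2) = 0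
  · rw [hr]; simp
  · field_simp

lemma qvmKey (Np : ℕ) (φ : Fin Np → ℂ) (Γ : Fin Np → ℝ) :
    (∑ j, (starRingEnd ℂ) (φ j) * qvmA Np φ Γ j)
      - (∑ j, φ j * (starRingEnd ℂ) (qvmA Np φ Γ j)) = 2 * qvmU Np φ Γ := by
  have hKA : ∀ j, (starRingEnd ℂ) (qvmA Np φ Γ j) =
      ∑ k ∈ univ \ {j}, 2 * (Γ k : ℂ) * ((starRingEnd ℂ) (φ j) - (starRingEnd ℂ) (φ k)) /
        ((‖φ j - φ k‖ : ℂ)^2) := by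
    intro j
    unfold qvmA
    rw [map_sum]
    refine sum_congr rfl fun k _ => ?_
    simp only [map_div₀, map_mul, map_sub, map_pow, Complex.conj_ofReal, map_ofNat]
  rw [← Finset.sum_sub_distrib]
  unfold qvmU
  rw [Finset.mul_sum]
  refine sum_congr rfl fun j _ => ?_
  rw [hKA]
  unfold qvmA
  rw [Finset.mul_sum, Finset.mul_sum, ← Finset.sum_sub_distrib, Finset.mul_sum]
  refine sum_congr rfl fun k _ => ?_
  ring

/-- The core algebraic identity. -/
lemma qvm_aux {Np : ℕ} (φ A : Fin Np → ℂ) (C T U : ℂ)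
    (hC : (starRingEnd ℂ) C = -C)
    (hU : (starRingEnd ℂ) U = -U)
    (hST : (∑ i, (starRingEnd ℂ) (φ i)) * T = U)
    (hKey : (∑ j, (starRingEnd ℂ) (φ j) * A j) - (∑ j, φ j * (starRingEnd ℂ) (A j)) = 2 * U) :
    ∑ j, ((C * (A j - T)) * (starRingEnd ℂ) (φ j)
      + φ j * (starRingEnd ℂ) (C * (A j - T))) = 0 := by
  set E : ℂ := ∑ j, (starRingEnd ℂ) (φ j) * (C * (A j - T)) with hEdef
  have hE : E = C * ((∑ j, (starRingEnd ℂ) (φ j) * A j) - U) := by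
    rw [hEdef]
    calc ∑ j, (starRingEnd ℂ) (φ j) * (C * (A j - T))
        = ∑ j, (C * ((starRingEnd ℂ) (φ j) * A j) - (C * T) * (starRingEnd ℂ) (φ j)) := by
          exact sum_congr rfl fun j _ => by ring
      _ = C * (∑ j, (starRingEnd ℂ) (φ j) * A j) - (C * T) * (∑ i, (starRingEnd ℂ) (φ i)) := by
          rw [Finset.sum_sub_distrib, ← Finset.mul_sum, ← Finset.mul_sum]
      _ = C * ((∑ j, (starRingEnd ℂ) (φ j) * A j) - U) := by
          rw [← hST]; ring
  have hPQ : (starRingEnd ℂ) (∑ j, (starRingEnd ℂ) (φ j) * A j)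
      = ∑ j, φ j * (starRingEnd ℂ) (A j) := by
    rw [map_sum]
    exact sum_congr rfl fun j _ => by rw [map_mul, Complex.conj_conj]
  have hsplit : ∑ j, ((C * (A j - T)) * (starRingEnd ℂ) (φ j)
      + φ j * (starRingEnd ℂ) (C * (A j - T))) = E + (starRingEnd ℂ) E := by
    rw [hEdef, map_sum, ← Finset.sum_add_distrib]
    exact sum_congr rfl fun j _ => by simp only [map_mul, Complex.conj_conj]; ring
  rw [hsplit, hE, map_mul, map_sub, hC, hU, hPQ]
  linear_combination C * hKey

/-- Norm conservation in the quantum vortex method: if the transformed vortex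
coordinates `ψ j` evolve under the generalized Schrödinger-type equation, then
the total norm `∑ j, |ψ j|²` is conserved. -/
theorem qvm_norm_conservation (Np : ℕ) (ψ : Fin Np → ℝ → ℂ)
    (Γ : Fin Np → ℝ) (lam : ℝ)
    (hdist : ∀ (t : ℝ) (j k : Fin Np), j ≠ k → ψ j t ≠ ψ k t)
    (hsum : ∀ t : ℝ, (∑ i, (starRingEnd ℂ) (ψ i t)) ≠ 0)
    (hode : ∀ (j : Fin Np) (t : ℝ), HasDerivAt (ψ j)
      (Complex.I * ((lam : ℂ)^2 / (4 * Real.pi)) *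
        ((∑ k ∈ univ \ {j}, 2 * (Γ k : ℂ) * (ψ j t - ψ k t) /
            ((‖ψ j t - ψ k t‖ : ℂ)^2)) -
         (∑ m, ∑ n ∈ univ \ {m}, (Γ n : ℂ) *
            (ψ m t * (starRingEnd ℂ) (ψ n t) - ψ n t * (starRingEnd ℂ) (ψ m t)) /
            ((‖ψ m t - ψ n t‖ : ℂ)^2 *
              (∑ i, (starRingEnd ℂ) (ψ i t)))))) t) :
    ∀ t : ℝ, HasDerivAt (fun s => ∑ j, ‖ψ j s‖ ^ 2) 0 t := by
  intro t
  -- the derivative of each ψ j at t, phrased via the abbreviations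
  have hode' : ∀ j, HasDerivAt (ψ j)
      (qvmC lam * (qvmA Np (fun i => ψ i t) Γ j - qvmT Np (fun i => ψ i t) Γ)) t :=
    fun j => hode j t
  set d : Fin Np → ℂ :=
    fun j => qvmC lam * (qvmA Np (fun i => ψ i t) Γ j - qvmT Np (fun i => ψ i t) Γ) with hd
  -- derivative of ψ j * conj (ψ j)
  have h1 : ∀ j, HasDerivAt (fun s => ψ j s * (starRingEnd ℂ) (ψ j s))
      (d j * (starRingEnd ℂ) (ψ j t) + ψ j t * (starRingEnd ℂ) (d j)) t := by
    intro j
    have h2 : HasDerivAt (fun s => (starRingEnd ℂ) (ψ j s)) ((starRingEnd ℂ) (d j)) t := by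
      simpa only [starRingEnd_apply] using (hode' j).star
    exact (hode' j).mul h2
  have h2 : HasDerivAt (fun s => ∑ j, ψ j s * (starRingEnd ℂ) (ψ j s))
      (∑ j, (d j * (starRingEnd ℂ) (ψ j t) + ψ j t * (starRingEnd ℂ) (d j))) t :=
    HasDerivAt.fun_sum fun j _ => h1 j
  have h3 : HasDerivAt (fun s => (∑ j, ψ j s * (starRingEnd ℂ) (ψ j s)).re)
      ((∑ j, (d j * (starRingEnd ℂ) (ψ j t) + ψ j t * (starRingEnd ℂ) (d j))).re) t :=
    (Complex.reCLM.hasFDerivAt.comp_hasDerivAt t h2)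
  have hkey : (∑ j, (d j * (starRingEnd ℂ) (ψ j t) + ψ j t * (starRingEnd ℂ) (d j))) = 0 :=
    qvm_aux (fun i => ψ i t) (qvmA Np (fun i => ψ i t) Γ) (qvmC lam)
      (qvmT Np (fun i => ψ i t) Γ) (qvmU Np (fun i => ψ i t) Γ)
      (qvmC_conj lam) (qvmU_conj Np _ Γ) (qvmST Np _ Γ (hsum t)) (qvmKey Np _ Γ)
  have hfun : (fun s => ∑ j, ‖ψ j s‖ ^ 2)
      = fun s => (∑ j, ψ j s * (starRingEnd ℂ) (ψ j s)).re := by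
    funext s
    rw [Complex.re_sum]
    exact sum_congr rfl fun j _ => by
      rw [Complex.mul_conj, Complex.ofReal_re, Complex.sq_norm]
  rw [hfun]
  simpa [hkey] using h3
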